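/- Let n > 1 and λ2, λ3, k > 0 with λ2 * (n-1)^((n-1)/n) > n * k * λ3, and let 0 < Tb_u < Tb_s be the two positive zeros of f(x) = λ2 * x^n/(λ3^n + x^n) - k x. Then f'(0) < 0, f'(Tb_u) > 0 and f'(Tb_s) < 0; in particular 0 and Tb_s are locally asymptotically stable equilibria of x' = f(x) and Tb_u is unstable. -/

import Mathlib

/-!
At a positive equilibrium `x` the balance `λ2 x^(n-1) = k (λ3^n + x^n)` turns the derivative into
`f'(x) = k ((n-1) λ3^n - x^n) / (λ3^n + x^n)`, so its sign is that of `c - x`, where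
`c = (n-1)^(1/n) λ3` is the peak of the per-capita activation rate. The hypothesis on the parameters
says exactly that `f c > 0`. Since `f(0) = 0`, `f'(0) = -k < 0` and `f x < λ2 - k x`, the function
`f` changes sign on both `(0, c)` and `(c, ∞)`, so one of the two positive equilibria lies on each
side of `c`.
-/

open Real Set Filter Topology

noncomputable section

def autoactivation (n lam2 lam3 k x : ℝ) : ℝ :=
  lam2 * x ^ n / (lam3 ^ n + x ^ n) - k * x

def hillPeak (n lam3 : ℝ) : ℝ :=
  (n - 1) ^ n⁻¹ * lam3

end

section Autoactivation

variable {n lam2 lam3 k x : ℝ}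

lemma hillPeak_pos (hn : 1 < n) (h3 : 0 < lam3) : 0 < hillPeak n lam3 :=
  mul_pos (rpow_pos_of_pos (sub_pos.2 hn) _) h3

lemma hillPeak_rpow (hn : 1 ≤ n) (h3 : 0 < lam3) :
    hillPeak n lam3 ^ n = (n - 1) * lam3 ^ n := by
  rw [hillPeak, mul_rpow (rpow_nonneg (sub_nonneg.2 hn) _) h3.le,
    rpow_inv_rpow (sub_nonneg.2 hn) (by linarith)]

lemma hasDerivAt_autoactivation (hn : 1 ≤ n) (h3 : 0 < lam3) (hx : 0 ≤ x) :
    HasDerivAt (autoactivation n lam2 lam3 k)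
      (lam2 * n * x ^ (n - 1) * lam3 ^ n / (lam3 ^ n + x ^ n) ^ 2 - k) x := by
  have hpow : HasDerivAt (· ^ n) (n * x ^ (n - 1)) x := hasDerivAt_rpow_const (Or.inr hn)
  have hden : lam3 ^ n + x ^ n ≠ 0 := by positivity
  have h : HasDerivAt (autoactivation n lam2 lam3 k) _ x :=
    ((hpow.const_mul lam2).div ((hasDerivAt_const x (lam3 ^ n)).add hpow) hden).sub
      ((hasDerivAt_id x).const_mul k)
  refine h.congr_deriv ?_
  simp only [Pi.add_apply, zero_add, mul_one]
  field_simp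
  ring

lemma continuousOn_autoactivation (hn : 1 ≤ n) (h3 : 0 < lam3) :
    ContinuousOn (autoactivation n lam2 lam3 k) (Ici 0) := fun _ hx =>
  (hasDerivAt_autoactivation hn h3 hx).continuousAt.continuousWithinAt

lemma deriv_autoactivation_zero (hn : 1 < n) (h3 : 0 < lam3) :
    deriv (autoactivation n lam2 lam3 k) 0 = -k := by
  rw [(hasDerivAt_autoactivation hn.le h3 le_rfl).deriv, zero_rpow (sub_ne_zero.2 hn.ne')]
  simp

lemma deriv_autoactivation_of_eq_zero (hn : 1 ≤ n) (h3 : 0 < lam3) (hx : 0 < x)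
    (hfx : autoactivation n lam2 lam3 k x = 0) :
    deriv (autoactivation n lam2 lam3 k) x
      = k * ((n - 1) * lam3 ^ n - x ^ n) / (lam3 ^ n + x ^ n) := by
  have hD : 0 < lam3 ^ n + x ^ n := by positivity
  have hbalance : lam2 * x ^ (n - 1) = k * (lam3 ^ n + x ^ n) := by
    rw [autoactivation, sub_eq_zero, div_eq_iff hD.ne'] at hfx
    rw [rpow_sub_one hx.ne', mul_div_assoc', div_eq_iff hx.ne', hfx]
    ring
  rw [(hasDerivAt_autoactivation hn h3 hx.le).deriv, mul_right_comm lam2, hbalance]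
  field_simp
  ring

lemma deriv_autoactivation_pos_of_lt_hillPeak (hn : 1 ≤ n) (h3 : 0 < lam3) (hk : 0 < k)
    (hx : 0 < x) (hfx : autoactivation n lam2 lam3 k x = 0) (hxc : x < hillPeak n lam3) :
    0 < deriv (autoactivation n lam2 lam3 k) x := by
  have hlt : x ^ n < (n - 1) * lam3 ^ n :=
    hillPeak_rpow hn h3 ▸ rpow_lt_rpow hx.le hxc (by linarith)
  rw [deriv_autoactivation_of_eq_zero hn h3 hx hfx]
  exact div_pos (mul_pos hk (sub_pos.2 hlt)) (by positivity)

lemma deriv_autoactivation_neg_of_hillPeak_lt (hn : 1 < n) (h3 : 0 < lam3) (hk : 0 < k)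
    (hx : 0 < x) (hfx : autoactivation n lam2 lam3 k x = 0) (hcx : hillPeak n lam3 < x) :
    deriv (autoactivation n lam2 lam3 k) x < 0 := by
  have hlt : (n - 1) * lam3 ^ n < x ^ n :=
    hillPeak_rpow hn.le h3 ▸ rpow_lt_rpow (hillPeak_pos hn h3).le hcx (by linarith)
  rw [deriv_autoactivation_of_eq_zero hn.le h3 hx hfx]
  exact div_neg_of_neg_of_pos (mul_neg_of_pos_of_neg hk (sub_neg.2 hlt)) (by positivity)

lemma autoactivation_hillPeak (hn : 1 ≤ n) (h3 : 0 < lam3) :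
    autoactivation n lam2 lam3 k (hillPeak n lam3) = lam2 * (n - 1) / n - k * hillPeak n lam3 := by
  have hL : 0 < lam3 ^ n := rpow_pos_of_pos h3 n
  have hn0 : n ≠ 0 := by linarith
  rw [autoactivation, hillPeak_rpow hn h3, show lam3 ^ n + (n - 1) * lam3 ^ n = n * lam3 ^ n by ring,
    ← mul_assoc, mul_div_mul_right _ _ hL.ne']

lemma autoactivation_hillPeak_pos (hn : 1 < n) (h3 : 0 < lam3)
    (hcond : lam2 * (n - 1) ^ ((n - 1) / n) > n * k * lam3) :
    0 < autoactivation n lam2 lam3 k (hillPeak n lam3) := by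
  have hn1 : 0 < n - 1 := sub_pos.2 hn
  have hsplit : (n - 1) ^ ((n - 1) / n) * (n - 1) ^ n⁻¹ = n - 1 := by
    rw [← rpow_add hn1, show (n - 1) / n + n⁻¹ = 1 by field_simp; ring, rpow_one]
  have hpeak : n * k * hillPeak n lam3 < lam2 * (n - 1) :=
    calc n * k * hillPeak n lam3 = n * k * lam3 * (n - 1) ^ n⁻¹ := by rw [hillPeak]; ring
      _ < lam2 * (n - 1) ^ ((n - 1) / n) * (n - 1) ^ n⁻¹ :=
        mul_lt_mul_of_pos_right hcond (rpow_pos_of_pos hn1 _)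
      _ = lam2 * (n - 1) := by rw [mul_assoc, hsplit]
  rw [autoactivation_hillPeak hn.le h3, sub_pos, lt_div_iff₀ (by linarith)]
  linarith

lemma autoactivation_lt (h2 : 0 < lam2) (h3 : 0 < lam3) (hx : 0 ≤ x) :
    autoactivation n lam2 lam3 k x < lam2 - k * x := by
  have hxn : 0 ≤ x ^ n := rpow_nonneg hx n
  have hL : 0 < lam3 ^ n := rpow_pos_of_pos h3 n
  rw [autoactivation, sub_lt_sub_iff_right, div_lt_iff₀ (by positivity)]
  nlinarith

lemma exists_root_mem_Ioo_zero_hillPeak (hn : 1 < n) (h3 : 0 < lam3) (hk : 0 < k)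
    (hcond : lam2 * (n - 1) ^ ((n - 1) / n) > n * k * lam3) :
    ∃ z ∈ Ioo 0 (hillPeak n lam3), autoactivation n lam2 lam3 k z = 0 := by
  have hc := hillPeak_pos hn h3
  have hsign := eventually_nhdsWithin_sign_eq_of_deriv_neg
    (f := autoactivation n lam2 lam3 k) (x₀ := 0)
    (by rw [deriv_autoactivation_zero hn h3]; linarith)
    (by simp [autoactivation, zero_rpow (by linarith : n ≠ 0)])
  obtain ⟨x₀, hsign₀, hx₀⟩ := ((hsign.filter_mono nhdsWithin_le_nhds).and (Ioo_mem_nhdsGT hc)).exists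
  rw [sign_neg (by linarith [hx₀.1] : 0 - x₀ < 0), sign_eq_neg_one_iff] at hsign₀
  obtain ⟨z, hz, hfz⟩ := intermediate_value_Ioo hx₀.2.le
    ((continuousOn_autoactivation hn.le h3).mono fun _ hy => hx₀.1.le.trans hy.1)
    ⟨hsign₀, autoactivation_hillPeak_pos hn h3 hcond⟩
  exact ⟨z, ⟨hx₀.1.trans hz.1, hz.2⟩, hfz⟩

lemma exists_root_gt_hillPeak (hn : 1 < n) (h2 : 0 < lam2) (h3 : 0 < lam3) (hk : 0 < k)
    (hcond : lam2 * (n - 1) ^ ((n - 1) / n) > n * k * lam3) :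
    ∃ z, hillPeak n lam3 < z ∧ autoactivation n lam2 lam3 k z = 0 := by
  have hc := hillPeak_pos hn h3
  set M := max (hillPeak n lam3) (lam2 / k) + 1
  have hcM : hillPeak n lam3 < M := by linarith [le_max_left (hillPeak n lam3) (lam2 / k)]
  have hkM : lam2 < k * M :=
    (div_lt_iff₀' hk).1 (by linarith [le_max_right (hillPeak n lam3) (lam2 / k)])
  obtain ⟨z, hz, hfz⟩ := intermediate_value_Ioo' hcM.le
    ((continuousOn_autoactivation hn.le h3).mono fun _ hy => hc.le.trans hy.1)
    ⟨(autoactivation_lt h2 h3 (by linarith)).trans (by linarith),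
      autoactivation_hillPeak_pos hn h3 hcond⟩
  exact ⟨z, hz.1, hfz⟩

end Autoactivation

theorem stmt_1 (n lam2 lam3 k : ℝ) (hn : 1 < n) (h2 : 0 < lam2) (h3 : 0 < lam3)
    (hk : 0 < k)
    (f : ℝ → ℝ) (hf : ∀ x, f x = lam2 * x ^ n / (lam3 ^ n + x ^ n) - k * x)
    (hcond : lam2 * (n - 1) ^ ((n - 1) / n) > n * k * lam3)
    (Tbu Tbs : ℝ) (hu : 0 < Tbu) (hus : Tbu < Tbs)
    (hfu : f Tbu = 0) (hfs : f Tbs = 0)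
    (honly : ∀ x, 0 < x → f x = 0 → x = Tbu ∨ x = Tbs) :
    deriv f 0 < 0 ∧ deriv f Tbu > 0 ∧ deriv f Tbs < 0 := by
  obtain rfl : f = autoactivation n lam2 lam3 k := funext hf
  obtain ⟨z₁, ⟨hz₁, hz₁c⟩, hfz₁⟩ := exists_root_mem_Ioo_zero_hillPeak hn h3 hk hcond
  obtain ⟨z₂, hcz₂, hfz₂⟩ := exists_root_gt_hillPeak hn h2 h3 hk hcond
  have hTbu : Tbu < hillPeak n lam3 := by
    rcases honly z₁ hz₁ hfz₁ with rfl | rfl <;> linarith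
  have hTbs : hillPeak n lam3 < Tbs := by
    rcases honly z₂ ((hillPeak_pos hn h3).trans hcz₂) hfz₂ with rfl | rfl <;> linarith
  refine ⟨by rw [deriv_autoactivation_zero hn h3]; linarith,
    deriv_autoactivation_pos_of_lt_hillPeak hn.le h3 hk hu hfu hTbu,
    deriv_autoactivation_neg_of_hillPeak_lt hn h3 hk (hu.trans hus) hfs hTbs⟩
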